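/- Assume (H1), (H2), let p, q ∈ [0,1] and λ > ‖β‖_∞ − μ₀. If φ ∈ X⁺ and ψ = (ψ₁,ψ₂,ψ₃) is the unique function such that each ψᵢ is absolutely continuous on [0,ω], μψ ∈ X, ψᵢ′(a) + (λ+μ(a))ψᵢ(a) = φᵢ(a) for a.e. a ∈ (0,ω) and i = 1,2,3, and ψ(0) = 𝓑ψ, then ψ ∈ X⁺; that is, the resolvent operator R(λ, A₁+A₂) : φ ↦ ψ is positive. -/

import Mathlib

/-!
Variation of constants: for `a < ω`,
`ψᵢ(a) e^{∫₀^a (λ+μ)} = ψᵢ(0) + ∫₀^a e^{∫₀^s (λ+μ)} φᵢ(s) ds ≥ ψᵢ(0)`, so with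
`mᵢ = min (ψᵢ(0)) 0` we get `ψᵢ(a) ≥ mᵢ e^{-(λ+μ₀)a}`. Inserting this into `ψ(0) = 𝓑ψ` gives
`ψ(0) ≥ θ P m` componentwise, where `θ = ∫₀^ω β(a) e^{-(λ+μ₀)a} da ≤ ‖β‖_∞/(λ+μ₀) < 1` and
`P = [[1, 1-p, 1-q], [0, p, 0], [0, 0, q]]` has nonnegative entries and column sums `1`. Hence
`m ≥ θ P m`; summing the components gives `∑ mᵢ ≥ θ ∑ mᵢ`, so `∑ mᵢ ≥ 0`, i.e. `m = 0`.
-/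

open MeasureTheory Set

noncomputable section

/-- `M` is the essential supremum of `|f|` on `[0,ω]`. -/
def IsEssSupOn (ω : ℝ) (f : ℝ → ℝ) (M : ℝ) : Prop :=
  (∀ᵐ a ∂(volume.restrict (Icc (0:ℝ) ω)), |f a| ≤ M) ∧
    ∀ C : ℝ, (∀ᵐ a ∂(volume.restrict (Icc (0:ℝ) ω)), |f a| ≤ C) → M ≤ C

/-- `m` is the essential infimum of `f` on `[0,ω]`. -/
def IsEssInfOn (ω : ℝ) (f : ℝ → ℝ) (m : ℝ) : Prop :=
  (∀ᵐ a ∂(volume.restrict (Icc (0:ℝ) ω)), m ≤ f a) ∧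
    ∀ C : ℝ, (∀ᵐ a ∂(volume.restrict (Icc (0:ℝ) ω)), C ≤ f a) → C ≤ m

/-- The nonlocal boundary operator `𝓑ψ = ∫₀^ω B(a)ψ(a)da` where `B(a)` has rows
`(β,(1−p)β,(1−q)β)`, `(0,pβ,0)`, `(0,0,qβ)`. -/
def Bvec (ω p q : ℝ) (β : ℝ → ℝ) (ψ : ℝ → Fin 3 → ℝ) : Fin 3 → ℝ :=
  ![∫ a in Icc (0:ℝ) ω, β a * (ψ a 0 + (1 - p) * ψ a 1 + (1 - q) * ψ a 2),
    ∫ a in Icc (0:ℝ) ω, p * (β a * ψ a 1),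
    ∫ a in Icc (0:ℝ) ω, q * (β a * ψ a 2)]

/-- `ψ = (ψ₁,ψ₂,ψ₃)` solves the resolvent problem for `A₁+A₂` at `λ = l` with datum `φ`:
each component is absolutely continuous on `[0,ω]` (primitive of an integrable `ψ'`),
`ψ, μψ ∈ L¹`, `ψᵢ′(a) + (l+μ(a))ψᵢ(a) = φᵢ(a)` a.e. and `ψ(0) = 𝓑ψ`. -/
def ResolventSol (ω p q l : ℝ) (β μf : ℝ → ℝ) (φ ψ : ℝ → Fin 3 → ℝ) : Prop :=
  ∃ ψ' : ℝ → Fin 3 → ℝ,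
    IntegrableOn ψ' (Icc 0 ω) ∧
    (∀ i : Fin 3, ∀ a ∈ Icc (0:ℝ) ω, ψ a i = ψ 0 i + ∫ s in (0:ℝ)..a, ψ' s i) ∧
    IntegrableOn ψ (Icc 0 ω) ∧
    IntegrableOn (fun a i => μf a * ψ a i) (Icc 0 ω) ∧
    (∀ i : Fin 3, ∀ᵐ a ∂(volume.restrict (Icc (0:ℝ) ω)),
      ψ' a i + (l + μf a) * ψ a i = φ a i) ∧
    ψ 0 = Bvec ω p q β ψ

open Filter

theorem LipschitzOnWith.comp_absolutelyContinuousOnInterval {X Y : Type*}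
    [PseudoMetricSpace X] [PseudoMetricSpace Y] {φ : X → Y} {K : NNReal} {t : Set X}
    {f : ℝ → X} {a b : ℝ} (hφ : LipschitzOnWith K φ t)
    (hf : AbsolutelyContinuousOnInterval f a b) (hft : MapsTo f (uIcc a b) t) :
    AbsolutelyContinuousOnInterval (φ ∘ f) a b := by
  refine squeeze_zero' (Eventually.of_forall fun _ => Finset.sum_nonneg fun _ _ => dist_nonneg)
    ?_ (by simpa using Tendsto.const_mul (K : ℝ) hf)
  filter_upwards [eventually_inf_principal.mpr (Eventually.of_forall fun E hE => hE)]
    with E hE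
  rw [Finset.mul_sum]
  refine Finset.sum_le_sum fun i hi => ?_
  have hmem := hE.1 i hi
  exact hφ.dist_le_mul _ (hft hmem.1) _ (hft hmem.2)

theorem ContDiff.comp_absolutelyContinuousOnInterval {φ : ℝ → ℝ} (hφ : ContDiff ℝ 1 φ)
    {f : ℝ → ℝ} {a b : ℝ} (hf : AbsolutelyContinuousOnInterval f a b) :
    AbsolutelyContinuousOnInterval (φ ∘ f) a b := by
  obtain ⟨C, hC⟩ := hf.exists_bound
  obtain ⟨K, hK⟩ := hφ.contDiffOn.exists_lipschitzOnWith one_ne_zero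
    (convex_closedBall 0 C) (isCompact_closedBall 0 C)
  exact hK.comp_absolutelyContinuousOnInterval hf fun x hx => mem_closedBall_zero_iff.mpr (hC x hx)

theorem mul_exp_integral_eq_add_integral {g w w' f : ℝ → ℝ} {a b : ℝ}
    (hg : IntervalIntegrable g volume a b) (hw' : IntervalIntegrable w' volume a b)
    (hw : ∀ x ∈ uIcc a b, w x = w a + ∫ s in a..x, w' s)
    (hode : ∀ᵐ x, x ∈ uIoc a b → w' x + g x * w x = f x) :
    w b * Real.exp (∫ s in a..b, g s) = w a + ∫ x in a..b, Real.exp (∫ s in a..x, g s) * f x := by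
  set W : ℝ → ℝ := fun x => w a + ∫ s in a..x, w' s
  set E : ℝ → ℝ := fun x => Real.exp (∫ s in a..x, g s)
  have hW : AbsolutelyContinuousOnInterval W a b :=
    (LipschitzWith.const (w a)).lipschitzOnWith.absolutelyContinuousOnInterval.fun_add
      (hw'.absolutelyContinuousOnInterval_intervalIntegral left_mem_uIcc)
  have hE : AbsolutelyContinuousOnInterval E a b :=
    Real.contDiff_exp.comp_absolutelyContinuousOnInterval
      (hg.absolutelyContinuousOnInterval_intervalIntegral left_mem_uIcc)
  have hderiv : ∀ᵐ x, x ∈ uIoc a b → deriv (fun x => W x * E x) x = E x * f x := by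
    filter_upwards [hw'.ae_hasDerivAt_integral, hg.ae_hasDerivAt_integral, hode]
      with x hW' hG hx hmem
    have hx' : x ∈ uIcc a b := uIoc_subset_uIcc hmem
    have hprod : HasDerivAt (fun x => W x * E x) (w' x * E x + W x * (E x * g x)) x :=
      ((hW' hx' a left_mem_uIcc).const_add (w a)).mul (hG hx' a left_mem_uIcc).exp
    rw [hprod.deriv, ← hx hmem, hw x hx']
    ring
  have hFTC := (hW.fun_mul hE).integral_deriv_eq_sub
  rw [intervalIntegral.integral_congr_ae hderiv] at hFTC
  simp only [W, E, intervalIntegral.integral_same, add_zero, Real.exp_zero, mul_one] at hFTC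
  rw [hw b right_mem_uIcc, hFTC]
  ring

theorem IsEssSupOn.nonneg {ω M : ℝ} {f : ℝ → ℝ} (h : IsEssSupOn ω f M) (hω : 0 < ω) :
    0 ≤ M := by
  have : (ae (volume.restrict (Icc (0:ℝ) ω))).NeBot := by
    rw [ae_restrict_neBot, Real.volume_Icc]
    simpa using hω
  obtain ⟨a, ha⟩ := h.1.exists
  exact (abs_nonneg _).trans ha

theorem setIntegral_Icc_exp_neg_mul_le {c : ℝ} (hc : 0 < c) (ω : ℝ) :
    ∫ a in Icc 0 ω, Real.exp (-c * a) ≤ 1 / c := by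
  have hIoi : ∫ a in Ioi 0, Real.exp (-c * a) = 1 / c := by
    rw [integral_exp_mul_Ioi (neg_neg_of_pos hc)]
    simp
  rw [← hIoi]
  refine setIntegral_mono_set (integrableOn_exp_mul_Ioi (neg_neg_of_pos hc) 0)
    (Eventually.of_forall fun _ => (Real.exp_pos _).le) ?_
  exact (Icc_subset_Ici_self.eventuallyLE).trans Ioi_ae_eq_Ici.symm.le

theorem setIntegral_mul_exp_neg_mul_lt_one {ω M c : ℝ} {f : ℝ → ℝ}
    (hfi : IntegrableOn (fun a => f a * Real.exp (-c * a)) (Icc 0 ω))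
    (hf : ∀ᵐ a ∂(volume.restrict (Icc (0:ℝ) ω)), f a ≤ M) (hM : 0 ≤ M) (hMc : M < c) :
    ∫ a in Icc 0 ω, f a * Real.exp (-c * a) < 1 := by
  have hc : 0 < c := hM.trans_lt hMc
  have hexp : IntegrableOn (fun a => Real.exp (-c * a)) (Icc 0 ω) :=
    (by fun_prop : Continuous fun a : ℝ => Real.exp (-c * a)).integrableOn_Icc
  calc ∫ a in Icc 0 ω, f a * Real.exp (-c * a)
      ≤ ∫ a in Icc 0 ω, M * Real.exp (-c * a) :=
        integral_mono_ae hfi (hexp.const_mul M)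
          (hf.mono fun a ha => mul_le_mul_of_nonneg_right ha (Real.exp_pos _).le)
    _ ≤ M * (1 / c) := by
        rw [integral_const_mul]
        exact mul_le_mul_of_nonneg_left (setIntegral_Icc_exp_neg_mul_le hc ω) hM
    _ < 1 := by rw [mul_one_div, div_lt_one hc]; exact hMc

theorem nonneg_of_le_mul_min {θ p q v₀ v₁ v₂ : ℝ} (hθ₀ : 0 ≤ θ) (hθ : θ < 1)
    (hp : p ∈ Icc (0:ℝ) 1) (hq : q ∈ Icc (0:ℝ) 1)
    (h₀ : θ * (min v₀ 0 + (1 - p) * min v₁ 0 + (1 - q) * min v₂ 0) ≤ v₀)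
    (h₁ : θ * (p * min v₁ 0) ≤ v₁) (h₂ : θ * (q * min v₂ 0) ≤ v₂) :
    0 ≤ v₀ ∧ 0 ≤ v₁ ∧ 0 ≤ v₂ := by
  obtain ⟨hp₀, hp₁⟩ := hp
  obtain ⟨hq₀, hq₁⟩ := hq
  set m₀ := min v₀ 0
  set m₁ := min v₁ 0
  set m₂ := min v₂ 0
  have hm₀ : m₀ ≤ 0 := min_le_right _ _
  have hm₁ : m₁ ≤ 0 := min_le_right _ _
  have hm₂ : m₂ ≤ 0 := min_le_right _ _
  have k₀ : θ * (m₀ + (1 - p) * m₁ + (1 - q) * m₂) ≤ m₀ :=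
    le_min h₀ (mul_nonpos_of_nonneg_of_nonpos hθ₀ (by nlinarith))
  have k₁ : θ * (p * m₁) ≤ m₁ := le_min h₁ (mul_nonpos_of_nonneg_of_nonpos hθ₀ (by nlinarith))
  have k₂ : θ * (q * m₂) ≤ m₂ := le_min h₂ (mul_nonpos_of_nonneg_of_nonpos hθ₀ (by nlinarith))
  have hsum : θ * (m₀ + m₁ + m₂) ≤ m₀ + m₁ + m₂ := by linarith
  have hsum₀ : 0 ≤ m₀ + m₁ + m₂ := by nlinarith
  exact ⟨min_eq_right_iff.mp (by linarith), min_eq_right_iff.mp (by linarith),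
    min_eq_right_iff.mp (by linarith)⟩

theorem mul_le_Bvec {ω p q M : ℝ} {β e : ℝ → ℝ} {ψ : ℝ → Fin 3 → ℝ} {m : Fin 3 → ℝ}
    (hp : p ∈ Icc (0:ℝ) 1) (hq : q ∈ Icc (0:ℝ) 1) (hβ : Measurable β)
    (hβM : ∀ᵐ a ∂(volume.restrict (Icc (0:ℝ) ω)), |β a| ≤ M)
    (hβ₀ : ∀ᵐ a ∂(volume.restrict (Icc (0:ℝ) ω)), 0 ≤ β a)
    (hψ : IntegrableOn ψ (Icc 0 ω)) (he : IntegrableOn (fun a => β a * e a) (Icc 0 ω))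
    (hlow : ∀ᵐ a ∂(volume.restrict (Icc (0:ℝ) ω)), ∀ i, m i * e a ≤ ψ a i) :
    (∫ a in Icc 0 ω, β a * e a) * (m 0 + (1 - p) * m 1 + (1 - q) * m 2) ≤ Bvec ω p q β ψ 0 ∧
      (∫ a in Icc 0 ω, β a * e a) * (p * m 1) ≤ Bvec ω p q β ψ 1 ∧
      (∫ a in Icc 0 ω, β a * e a) * (q * m 2) ≤ Bvec ω p q β ψ 2 := by
  have hp' : 0 ≤ 1 - p := sub_nonneg.mpr hp.2
  have hq' : 0 ≤ 1 - q := sub_nonneg.mpr hq.2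
  have hψi : ∀ i, IntegrableOn (fun a => ψ a i) (Icc 0 ω) := hψ.eval
  have hβmul : ∀ g : ℝ → ℝ, IntegrableOn g (Icc 0 ω) →
      IntegrableOn (fun a => β a * g a) (Icc 0 ω) := fun g hg =>
    hg.bdd_mul hβ.aestronglyMeasurable (hβM.mono fun a ha => by rwa [Real.norm_eq_abs])
  have key : ∀ {x : ℝ} {f : ℝ → ℝ}, IntegrableOn f (Icc 0 ω) →
      (∀ᵐ a ∂(volume.restrict (Icc (0:ℝ) ω)), β a * e a * x ≤ f a) →
      (∫ a in Icc 0 ω, β a * e a) * x ≤ ∫ a in Icc 0 ω, f a := fun hf h =>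
    (integral_mul_const _ _).symm.trans_le (integral_mono_ae (he.mul_const _) hf h)
  refine ⟨key (hβmul _ (((hψi 0).add ((hψi 1).const_mul _)).add ((hψi 2).const_mul _))) ?_,
    key ((hβmul _ (hψi 1)).const_mul p) ?_, key ((hβmul _ (hψi 2)).const_mul q) ?_⟩ <;>
    filter_upwards [hβ₀, hlow] with a hβa ha
  · calc β a * e a * (m 0 + (1 - p) * m 1 + (1 - q) * m 2)
        = β a * (m 0 * e a + (1 - p) * (m 1 * e a) + (1 - q) * (m 2 * e a)) := by ring
      _ ≤ β a * (ψ a 0 + (1 - p) * ψ a 1 + (1 - q) * ψ a 2) := by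
        gcongr
        exacts [ha 0, ha 1, ha 2]
  · calc β a * e a * (p * m 1) = p * (β a * (m 1 * e a)) := by ring
      _ ≤ p * (β a * ψ a 1) := by gcongr; exacts [hp.1, ha 1]
  · calc β a * e a * (q * m 2) = q * (β a * (m 2 * e a)) := by ring
      _ ≤ q * (β a * ψ a 2) := by gcongr; exacts [hq.1, ha 2]

namespace ResolventSol

variable {ω p q l : ℝ} {β μf : ℝ → ℝ} {φ ψ : ℝ → Fin 3 → ℝ}

theorem le_mul_exp_integral (hψ : ResolventSol ω p q l β μf φ ψ)
    (hφ : ∀ᵐ a ∂(volume.restrict (Icc (0:ℝ) ω)), ∀ i : Fin 3, 0 ≤ φ a i)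
    {a : ℝ} (ha : a ∈ Icc 0 ω) (hμ : IntervalIntegrable (fun s => l + μf s) volume 0 a)
    (i : Fin 3) :
    ψ 0 i ≤ ψ a i * Real.exp (∫ s in (0:ℝ)..a, (l + μf s)) := by
  obtain ⟨ψ', hψ', hψψ', -, -, hode, -⟩ := hψ
  have hsub : Icc 0 a ⊆ Icc 0 ω := Icc_subset_Icc_right ha.2
  have huIcc : uIcc 0 a = Icc 0 a := uIcc_of_le ha.1
  rw [mul_exp_integral_eq_add_integral (w := fun s => ψ s i) (w' := fun s => ψ' s i)
    (f := fun s => φ s i) hμ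
    (IntegrableOn.intervalIntegrable (huIcc ▸ IntegrableOn.mono_set (hψ'.eval i) hsub))
    (fun x hx => hψψ' i x (hsub (huIcc ▸ hx)))
    (by
      filter_upwards [(ae_restrict_iff' measurableSet_Icc).mp (hode i)] with x hx hmem
      exact hx (hsub (huIcc ▸ uIoc_subset_uIcc hmem)))]
  refine le_add_of_nonneg_right (intervalIntegral.integral_nonneg_of_ae_restrict ha.1 ?_)
  filter_upwards [ae_restrict_of_ae_restrict_of_subset hsub hφ] with x hx
  exact mul_nonneg (Real.exp_pos _).le (hx i)

theorem min_mul_exp_le (hψ : ResolventSol ω p q l β μf φ ψ) {μ₀ : ℝ}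
    (hμloc : ∀ b : ℝ, 0 ≤ b → b < ω → IntegrableOn μf (Icc 0 b))
    (hμ₀ : ∀ᵐ a ∂(volume.restrict (Icc (0:ℝ) ω)), μ₀ ≤ μf a)
    (hφ : ∀ᵐ a ∂(volume.restrict (Icc (0:ℝ) ω)), ∀ i : Fin 3, 0 ≤ φ a i) :
    ∀ᵐ a ∂(volume.restrict (Icc (0:ℝ) ω)), ∀ i : Fin 3,
      min (ψ 0 i) 0 * Real.exp (-(l + μ₀) * a) ≤ ψ a i := by
  have hIco : ∀ᵐ a ∂(volume.restrict (Icc (0:ℝ) ω)), a ∈ Ico 0 ω := by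
    rw [← Measure.restrict_congr_set Ico_ae_eq_Icc]
    exact ae_restrict_mem measurableSet_Ico
  filter_upwards [hIco] with a ha i
  have hμ : IntervalIntegrable (fun s => l + μf s) volume 0 a :=
    IntegrableOn.intervalIntegrable (uIcc_of_le ha.1 ▸ (integrable_const l).add (hμloc a ha.1 ha.2))
  set G := ∫ s in (0:ℝ)..a, (l + μf s)
  have hG : (l + μ₀) * a ≤ G := by
    have hmono := intervalIntegral.integral_mono_ae_restrict ha.1 intervalIntegrable_const hμ
      (ae_restrict_of_ae_restrict_of_subset (Icc_subset_Icc_right ha.2.le)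
        (hμ₀.mono fun s hs => (add_le_add_iff_left l).mpr hs))
    rwa [intervalIntegral.integral_const, sub_zero, smul_eq_mul, mul_comm] at hmono
  calc min (ψ 0 i) 0 * Real.exp (-(l + μ₀) * a)
      ≤ min (ψ 0 i) 0 * Real.exp (-G) :=
        mul_le_mul_of_nonpos_left (Real.exp_le_exp.mpr (by linarith)) (min_le_right _ _)
    _ ≤ ψ 0 i * Real.exp (-G) := mul_le_mul_of_nonneg_right (min_le_left _ _) (Real.exp_pos _).le
    _ ≤ ψ a i := by
        rw [Real.exp_neg, ← div_eq_mul_inv, div_le_iff₀ (Real.exp_pos _)]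
        exact hψ.le_mul_exp_integral hφ (Ico_subset_Icc_self ha) hμ i

end ResolventSol

theorem resolvent_positive_general (ω : ℝ) (hω : 0 < ω)
    (β μf : ℝ → ℝ) (Mβ β₀ μ₀ : ℝ)
    (hβmeas : Measurable β) (hMβ : IsEssSupOn ω β Mβ)
    (hβ₀ : IsEssInfOn ω β β₀) (hβ₀pos : 0 < β₀)
    (hμloc : ∀ b : ℝ, 0 ≤ b → b < ω → IntegrableOn μf (Icc 0 b))
    (hμ₀ : IsEssInfOn ω μf μ₀)
    (p q : ℝ) (hp : p ∈ Icc (0:ℝ) 1) (hq : q ∈ Icc (0:ℝ) 1)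
    (l : ℝ) (hl : Mβ - μ₀ < l)
    (φ : ℝ → Fin 3 → ℝ)
    (hφpos : ∀ᵐ a ∂(volume.restrict (Icc (0:ℝ) ω)), ∀ i : Fin 3, 0 ≤ φ a i)
    (ψ : ℝ → Fin 3 → ℝ) (hψ : ResolventSol ω p q l β μf φ ψ) :
    ∀ᵐ a ∂(volume.restrict (Icc (0:ℝ) ω)), ∀ i : Fin 3, 0 ≤ ψ a i := by
  obtain ⟨-, -, -, hψi, -, -, hbc⟩ := id hψ
  have hlow := hψ.min_mul_exp_le hμloc hμ₀.1 hφpos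
  have hβnonneg : ∀ᵐ a ∂(volume.restrict (Icc (0:ℝ) ω)), 0 ≤ β a :=
    hβ₀.1.mono fun a ha => hβ₀pos.le.trans ha
  have hk : IntegrableOn (fun a => β a * Real.exp (-(l + μ₀) * a)) (Icc 0 ω) :=
    (by fun_prop : Continuous fun a : ℝ => Real.exp (-(l + μ₀) * a)).integrableOn_Icc.bdd_mul
      hβmeas.aestronglyMeasurable (hMβ.1.mono fun a ha => by rwa [Real.norm_eq_abs])
  have hθ₀ : 0 ≤ ∫ a in Icc 0 ω, β a * Real.exp (-(l + μ₀) * a) :=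
    integral_nonneg_of_ae (hβnonneg.mono fun a ha => mul_nonneg ha (Real.exp_pos _).le)
  have hθ₁ : ∫ a in Icc 0 ω, β a * Real.exp (-(l + μ₀) * a) < 1 :=
    setIntegral_mul_exp_neg_mul_lt_one hk (hMβ.1.mono fun a ha => (le_abs_self _).trans ha)
      (hMβ.nonneg hω) (by linarith)
  obtain ⟨h₀, h₁, h₂⟩ := mul_le_Bvec hp hq hβmeas hMβ.1 hβnonneg hψi hk hlow
  rw [← hbc] at h₀ h₁ h₂
  obtain ⟨v₀, v₁, v₂⟩ := nonneg_of_le_mul_min hθ₀ hθ₁ hp hq h₀ h₁ h₂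
  filter_upwards [hlow] with a ha i
  have hmin : min (ψ 0 i) 0 = 0 := by fin_cases i <;> simpa
  simpa [hmin] using ha i

/-- under (H1), (H2), for `p,q ∈ [0,1]` and `λ > ‖β‖_∞ − μ₀`, if
`φ ∈ X⁺` (componentwise nonnegative a.e.) and `ψ` solves the resolvent problem
`ψᵢ′ + (λ+μ)ψᵢ = φᵢ`, `ψ(0) = 𝓑ψ`, then `ψ ∈ X⁺`: the resolvent operator
`R(λ, A₁+A₂)` is positive. -/
theorem resolvent_positive (ω : ℝ) (hω : 0 < ω)
    (β γ δ μf : ℝ → ℝ) (Mβ β₀ γ₀ δ₀ μ₀ : ℝ)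
    (hβmeas : Measurable β) (hMβ : IsEssSupOn ω β Mβ)
    (hβ₀ : IsEssInfOn ω β β₀) (hβ₀pos : 0 < β₀)
    (hγmeas : Measurable γ) (hMγ : ∃ Mγ, IsEssSupOn ω γ Mγ)
    (hγ₀ : IsEssInfOn ω γ γ₀) (hγ₀pos : 0 < γ₀)
    (hδmeas : Measurable δ) (hMδ : ∃ Mδ, IsEssSupOn ω δ Mδ)
    (hδ₀ : IsEssInfOn ω δ δ₀) (hδ₀pos : 0 < δ₀)
    (hμmeas : Measurable μf)
    (hμloc : ∀ b : ℝ, 0 ≤ b → b < ω → IntegrableOn μf (Icc 0 b))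
    (hμ₀ : IsEssInfOn ω μf μ₀) (hμ₀pos : 0 < μ₀)
    (hμinf : ∫⁻ a in Icc (0:ℝ) ω, ENNReal.ofReal (μf a) = ⊤)
    (p q : ℝ) (hp : p ∈ Icc (0:ℝ) 1) (hq : q ∈ Icc (0:ℝ) 1)
    (l : ℝ) (hl : Mβ - μ₀ < l)
    (φ : ℝ → Fin 3 → ℝ) (hφ : IntegrableOn φ (Icc 0 ω))
    (hφpos : ∀ᵐ a ∂(volume.restrict (Icc (0:ℝ) ω)), ∀ i : Fin 3, 0 ≤ φ a i)
    (ψ : ℝ → Fin 3 → ℝ) (hψ : ResolventSol ω p q l β μf φ ψ) :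
    ∀ᵐ a ∂(volume.restrict (Icc (0:ℝ) ω)), ∀ i : Fin 3, 0 ≤ ψ a i :=
  resolvent_positive_general ω hω β μf Mβ β₀ μ₀ hβmeas hMβ hβ₀ hβ₀pos hμloc hμ₀ p q hp hq l hl φ
    hφpos ψ hψ

end
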